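/- arXiv:2102.01100 — 10 statements merged into one kernel-verified Lean document; each statement's English description precedes it below -/
import Mathlib

section
/- The function φ : [0,1) → ℝ defined by φ(t) = (1−t)(e·t^{t/(1−t)} − 1) (with the convention t^{t/(1-t)} = exp((t/(1-t))·log t) for t ∈ (0,1) and φ(0) = e−1) is nonnegative on [0,1); equivalently, for all t ∈ (0,1), 1 − t ≤ e·(1−t)·t^{t/(1−t)}. -/
/-- The function `φ(t) = (1−t)(e·t^{t/(1−t)} − 1)` is nonnegative on `[0,1)`.
Here `t ^ (t/(1-t))` is the real power (`Real.rpow`), which for `t ∈ (0,1)` equals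
`exp((t/(1-t))·log t)` and at `t = 0` equals `1` (exponent `0`), giving `φ(0) = e − 1`. -/
theorem stmt_1 :
    ∀ t ∈ Set.Ico (0 : ℝ) 1,
      0 ≤ (1 - t) * (Real.exp 1 * t ^ (t / (1 - t)) - 1) := by
  rintro t ⟨ht0, ht1⟩
  have h1t : 0 < 1 - t := by linarith
  rcases eq_or_lt_of_le ht0 with h | h
  · subst h
    simp

  · -- t ∈ (0,1)
    apply mul_nonneg h1t.le
    have hrpow : t ^ (t / (1 - t)) = Real.exp ((t / (1 - t)) * Real.log t) :=
      by rw [Real.rpow_def_of_pos h]; ring_nf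
    have hlog : t - 1 ≤ t * Real.log t := by
      have := Real.log_le_sub_one_of_pos (x := 1 / t) (by positivity)
      rw [Real.log_div one_ne_zero (ne_of_gt h), Real.log_one] at this
      have ht : t * (1/t) = 1 := by field_simp
      nlinarith [mul_le_mul_of_nonneg_left this h.le]
    have hexp : (-1 : ℝ) ≤ (t / (1 - t)) * Real.log t := by
      rw [div_mul_eq_mul_div, show ((-1:ℝ) ≤ t * Real.log t / (1-t)) ↔ _ from le_div_iff₀ h1t]
      linarith
    have : Real.exp (-1) ≤ Real.exp ((t / (1 - t)) * Real.log t) := Real.exp_le_exp.2 hexp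
    have key : 1 ≤ Real.exp 1 * t ^ (t / (1 - t)) := by
      rw [hrpow]
      calc (1:ℝ) = Real.exp 1 * Real.exp (-1) := by rw [← Real.exp_add]; norm_num
        _ ≤ _ := by
          apply mul_le_mul_of_nonneg_left this (Real.exp_pos 1).le
    linarith
end

section
/- Let μ > ν ≥ 0. Then Σ_{k=0}^{∞} max{ν^k/(ν+1)^{k+1} − μ^k/(μ+1)^{k+1}, 0} = (μ/(μ+1))^{N₀+1} − (ν/(ν+1))^{N₀+1}, where N₀ = N₀(ν,μ) is the largest integer k with ν^k/(ν+1)^{k+1} ≥ μ^k/(μ+1)^{k+1}. -/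
/-!
The ratio of consecutive terms of the geometric distribution of mean `x` is `x / (x + 1)`, which
increases with `x`; hence `{k | q_k ≤ p_k}` is an initial segment `{0, …, N₀}` of `ℕ`. The positive
parts in the sum are therefore `p_k - q_k` for `k ≤ N₀` and vanish afterwards, and the two partial
sums of the geometric distributions are `1 - (ν/(ν+1))^(N₀+1)` and `1 - (μ/(μ+1))^(N₀+1)`.
-/

open Finset

/-- The mass at `k` of the geometric distribution on `ℕ` with mean `x`. -/
noncomputable def geomProb (x : ℝ) (k : ℕ) : ℝ := x ^ k / (x + 1) ^ (k + 1)

lemma geomProb_succ (x : ℝ) (k : ℕ) : geomProb x (k + 1) = x / (x + 1) * geomProb x k := by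
  rw [geomProb, geomProb, div_mul_div_comm, ← pow_succ', ← pow_succ']

lemma sum_range_geomProb {x : ℝ} (hx : x + 1 ≠ 0) (n : ℕ) :
    ∑ k ∈ range n, geomProb x k = 1 - (x / (x + 1)) ^ n := by
  induction n with
  | zero => simp
  | succ n ih =>
    have hterm : geomProb x n = (x / (x + 1)) ^ n * (1 - x / (x + 1)) := by
      rw [geomProb, div_pow, one_sub_div hx, add_sub_cancel_left, pow_succ]
      field_simp
    rw [sum_range_succ, ih, hterm]
    ring

lemma div_add_one_le_div_add_one {ν μ : ℝ} (hν : 0 ≤ ν) (hνμ : ν ≤ μ) :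
    ν / (ν + 1) ≤ μ / (μ + 1) := by
  rw [div_le_div_iff₀ (by linarith) (by linarith)]
  linarith

lemma geomProb_le_of_succ {ν μ : ℝ} (hν : 0 ≤ ν) (hνμ : ν < μ) {k : ℕ}
    (h : geomProb μ (k + 1) ≤ geomProb ν (k + 1)) : geomProb μ k ≤ geomProb ν k := by
  have hμ : 0 < μ / (μ + 1) := div_pos (by linarith) (by linarith)
  have hpν : 0 ≤ geomProb ν k := div_nonneg (pow_nonneg hν k) (pow_nonneg (by linarith) _)
  rw [geomProb_succ, geomProb_succ] at h
  refine le_of_mul_le_mul_left (h.trans ?_) hμ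
  exact mul_le_mul_of_nonneg_right (div_add_one_le_div_add_one hν hνμ.le) hpν

lemma geomProb_le_of_le {ν μ : ℝ} (hν : 0 ≤ ν) (hνμ : ν < μ) {m n : ℕ} (hmn : m ≤ n)
    (h : geomProb μ n ≤ geomProb ν n) : geomProb μ m ≤ geomProb ν m := by
  induction n, hmn using Nat.le_induction with
  | base => exact h
  | succ n _ ih => exact ih (geomProb_le_of_succ hν hνμ h)

lemma tsum_max_zero_eq_sum_range {α : Type*} [AddCommMonoid α] [LinearOrder α]
    [TopologicalSpace α] {f : ℕ → α} {N : ℕ} (hle : ∀ k ≤ N, 0 ≤ f k)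
    (hgt : ∀ k, N < k → f k ≤ 0) :
    ∑' k, max (f k) 0 = ∑ k ∈ range (N + 1), f k := by
  rw [tsum_eq_sum (s := range (N + 1)) fun k hk ↦ max_eq_right (hgt k (by simpa using hk))]
  exact sum_congr rfl fun k hk ↦ max_eq_left (hle k (Nat.lt_succ_iff.mp (mem_range.mp hk)))

/-- For `μ > ν ≥ 0`, if `N₀` is the largest natural number `k` with
`ν^k/(ν+1)^{k+1} ≥ μ^k/(μ+1)^{k+1}`, then
`Σ_k max{ν^k/(ν+1)^{k+1} − μ^k/(μ+1)^{k+1}, 0} = (μ/(μ+1))^{N₀+1} − (ν/(ν+1))^{N₀+1}`. -/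
theorem stmt_4 (ν μ : ℝ) (hν : 0 ≤ ν) (hμν : ν < μ) (N₀ : ℕ)
    (hN₀ : IsGreatest {k : ℕ | μ ^ k / (μ + 1) ^ (k + 1) ≤ ν ^ k / (ν + 1) ^ (k + 1)} N₀) :
    ∑' k : ℕ, max (ν ^ k / (ν + 1) ^ (k + 1) - μ ^ k / (μ + 1) ^ (k + 1)) 0
      = (μ / (μ + 1)) ^ (N₀ + 1) - (ν / (ν + 1)) ^ (N₀ + 1) := by
  change ∑' k, max (geomProb ν k - geomProb μ k) 0 = _
  have hle : ∀ k ≤ N₀, 0 ≤ geomProb ν k - geomProb μ k := fun k hk ↦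
    sub_nonneg.mpr (geomProb_le_of_le hν hμν hk hN₀.1)
  have hgt : ∀ k, N₀ < k → geomProb ν k - geomProb μ k ≤ 0 := fun k hk ↦
    sub_nonpos.mpr (not_le.mp fun h ↦ (hk.trans_le (hN₀.2 h)).false).le
  rw [tsum_max_zero_eq_sum_range hle hgt, sum_sub_distrib,
    sum_range_geomProb (by linarith), sum_range_geomProb (by linarith)]
  ring
end

section
/- Let μ > ν ≥ 0. Then Σ_{k=0}^{∞} max{ν^k/(ν+1)^{k+1} − μ^k/(μ+1)^{k+1}, 0} = max over integers N ≥ 1 of ((μ/(μ+1))^N − (ν/(ν+1))^N). -/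
/-!
With `b = ν/(ν+1) < a = μ/(μ+1)` the two weights are `p_k = b^k (1-b)` and `q_k = a^k (1-a)`.
Since `q_k / p_k` grows like `(a/b)^k`, the difference `p_k - q_k` is nonnegative before some
index `M ≥ 1` and negative from then on. Hence the sum of its positive parts is the partial sum
`∑_{k<M} (p_k - q_k) = a^M - b^M`, and `M` maximises the partial sums
`∑_{k<N} (p_k - q_k) = a^N - b^N`.
-/

open Finset

theorem tsum_max_zero_eq_sum_range_of_sign_change {d : ℕ → ℝ} {M : ℕ}
    (hpos : ∀ k < M, 0 ≤ d k) (hneg : ∀ k, M ≤ k → d k ≤ 0) :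
    ∑' k, max (d k) 0 = ∑ k ∈ range M, d k := by
  rw [tsum_eq_sum (s := range M) fun k hk => max_eq_right (hneg k (by simpa using hk))]
  exact sum_congr rfl fun k hk => max_eq_left (hpos k (mem_range.mp hk))

theorem isGreatest_sum_range_of_sign_change {d : ℕ → ℝ} {M : ℕ} (hM : 1 ≤ M)
    (hpos : ∀ k < M, 0 ≤ d k) (hneg : ∀ k, M ≤ k → d k ≤ 0) :
    IsGreatest ((fun N => ∑ k ∈ range N, d k) '' {N | 1 ≤ N}) (∑' k, max (d k) 0) := by
  have htsum := tsum_max_zero_eq_sum_range_of_sign_change hpos hneg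
  refine ⟨⟨M, hM, htsum.symm⟩, ?_⟩
  rintro _ ⟨N, -, rfl⟩
  have hsummable : Summable fun k => max (d k) 0 :=
    summable_of_ne_finset_zero (s := range M) fun k hk =>
      max_eq_right (hneg k (by simpa using hk))
  calc ∑ k ∈ range N, d k ≤ ∑ k ∈ range N, max (d k) 0 :=
        sum_le_sum fun k _ => le_max_left _ _
    _ ≤ ∑' k, max (d k) 0 := hsummable.sum_le_tsum _ fun k _ => le_max_right _ _

theorem sum_range_pow_mul_one_sub (c : ℝ) (n : ℕ) :
    ∑ k ∈ range n, c ^ k * (1 - c) = 1 - c ^ n := by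
  rw [← sum_mul, geom_sum_mul_neg]

section GeometricCrossing

variable {a b : ℝ}

theorem pow_mul_one_sub_lt_succ (hb : 0 ≤ b) (hba : b < a) (ha : a < 1) {k : ℕ}
    (h : b ^ k * (1 - b) < a ^ k * (1 - a)) :
    b ^ (k + 1) * (1 - b) < a ^ (k + 1) * (1 - a) := by
  have hpk : 0 ≤ b ^ k * (1 - b) := mul_nonneg (pow_nonneg hb k) (by linarith)
  calc b ^ (k + 1) * (1 - b) = b * (b ^ k * (1 - b)) := by ring
    _ ≤ a * (b ^ k * (1 - b)) := mul_le_mul_of_nonneg_right hba.le hpk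
    _ < a * (a ^ k * (1 - a)) := mul_lt_mul_of_pos_left h (hb.trans_lt hba)
    _ = a ^ (k + 1) * (1 - a) := by ring

theorem exists_pow_mul_one_sub_lt (hb : 0 ≤ b) (hba : b < a) (ha : a < 1) :
    ∃ k : ℕ, b ^ k * (1 - b) < a ^ k * (1 - a) := by
  have ha0 : 0 < a := hb.trans_lt hba
  obtain ⟨k, hk⟩ := exists_pow_lt_of_lt_one
    (div_pos (sub_pos.mpr ha) (sub_pos.mpr (hba.trans ha))) ((div_lt_one ha0).mpr hba)
  refine ⟨k, ?_⟩
  have hk' : (b / a) ^ k * (1 - b) < 1 - a := (lt_div_iff₀ (by linarith)).mp hk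
  calc b ^ k * (1 - b) = a ^ k * ((b / a) ^ k * (1 - b)) := by
        rw [div_pow]; field_simp
    _ < a ^ k * (1 - a) := mul_lt_mul_of_pos_left hk' (pow_pos ha0 k)

theorem exists_sign_change_pow_mul_one_sub (hb : 0 ≤ b) (hba : b < a) (ha : a < 1) :
    ∃ M, 1 ≤ M ∧ (∀ k < M, a ^ k * (1 - a) ≤ b ^ k * (1 - b)) ∧
      ∀ k, M ≤ k → b ^ k * (1 - b) < a ^ k * (1 - a) := by
  have hex := exists_pow_mul_one_sub_lt hb hba ha
  have hmono : Monotone fun k : ℕ => b ^ k * (1 - b) < a ^ k * (1 - a) :=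
    monotone_nat_of_le_succ fun k => pow_mul_one_sub_lt_succ hb hba ha
  refine ⟨Nat.find hex, Nat.one_le_iff_ne_zero.mpr fun h0 => ?_,
    fun k hk => not_lt.mp (Nat.find_min hex hk), fun k hk => hmono hk (Nat.find_spec hex)⟩
  have := Nat.find_spec hex
  rw [h0, pow_zero, pow_zero, one_mul, one_mul] at this
  linarith

theorem isGreatest_pow_sub_pow (hb : 0 ≤ b) (hba : b < a) (ha : a < 1) :
    IsGreatest ((fun N : ℕ => a ^ N - b ^ N) '' {N | 1 ≤ N})
      (∑' k : ℕ, max (b ^ k * (1 - b) - a ^ k * (1 - a)) 0) := by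
  obtain ⟨M, hM, hpos, hneg⟩ := exists_sign_change_pow_mul_one_sub hb hba ha
  have hpartial : (fun N : ℕ => a ^ N - b ^ N) =
      fun N => ∑ k ∈ range N, (b ^ k * (1 - b) - a ^ k * (1 - a)) := by
    funext N
    rw [sum_sub_distrib, sum_range_pow_mul_one_sub, sum_range_pow_mul_one_sub]
    ring
  rw [hpartial]
  exact isGreatest_sum_range_of_sign_change hM (fun k hk => sub_nonneg.mpr (hpos k hk))
    fun k hk => (sub_neg.mpr (hneg k hk)).le

end GeometricCrossing

theorem pow_div_add_one_pow_succ {x : ℝ} (hx : x + 1 ≠ 0) (k : ℕ) :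
    x ^ k / (x + 1) ^ (k + 1) = (x / (x + 1)) ^ k * (1 - x / (x + 1)) := by
  rw [div_pow, pow_succ]
  field_simp
  ring

/-- For `μ > ν ≥ 0`, the half total variation distance
`Σ_k max{ν^k/(ν+1)^{k+1} − μ^k/(μ+1)^{k+1}, 0}` is the maximum over integers `N ≥ 1`
of `(μ/(μ+1))^N − (ν/(ν+1))^N`. -/
theorem stmt_5 (ν μ : ℝ) (hν : 0 ≤ ν) (hμν : ν < μ) :
    IsGreatest ((fun N : ℕ => (μ / (μ + 1)) ^ N - (ν / (ν + 1)) ^ N) '' {N : ℕ | 1 ≤ N})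
      (∑' k : ℕ, max (ν ^ k / (ν + 1) ^ (k + 1) - μ ^ k / (μ + 1) ^ (k + 1)) 0) := by
  have hν1 : 0 < ν + 1 := by linarith
  have hμ1 : 0 < μ + 1 := by linarith
  simp only [pow_div_add_one_pow_succ hν1.ne', pow_div_add_one_pow_succ hμ1.ne']
  refine isGreatest_pow_sub_pow (div_nonneg hν hν1.le) ?_ ((div_lt_one hμ1).mpr (by linarith))
  rw [div_lt_div_iff₀ hν1 hμ1]
  linarith
end

section
/- For all real numbers μ > ν ≥ 0, ∫₀^∞ max{(1/(ν+1))·e^{−t/(ν+1)} − (1/(μ+1))·e^{−t/(μ+1)}, 0} dt = ((μ−ν)/(μ+1)) · ((μ+1)/(ν+1))^{−(ν+1)/(μ−ν)}. -/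
/-! With means `a < b`, the exponential densities cross exactly once, at
`t₀ = ab/(b-a) · log(b/a)`, so the positive part of their difference is the difference itself on
`(0, t₀]` and vanishes afterwards. Since `t ↦ exp(-t/b) - exp(-t/a)` is an antiderivative, the
integral is `exp(-t₀/b) - exp(-t₀/a) = (b/a)^(-a/(b-a)) - (b/a)^(-b/(b-a))`, which factors as
`(b-a)/b · (b/a)^(-a/(b-a))`. -/

open MeasureTheory Real Set

noncomputable def expDensity (m t : ℝ) : ℝ := 1 / m * exp (-t / m)

noncomputable def crossover (a b : ℝ) : ℝ := a * b / (b - a) * log (b / a)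

lemma hasDerivAt_exp_neg_div (m t : ℝ) :
    HasDerivAt (fun t => exp (-t / m)) (-expDensity m t) t := by
  convert ((hasDerivAt_neg t).div_const m).exp using 1
  rw [expDensity]
  ring

lemma integral_expDensity_sub (a b T : ℝ) :
    ∫ t in (0)..T, (expDensity a t - expDensity b t) = exp (-T / b) - exp (-T / a) := by
  have hderiv (t : ℝ) : HasDerivAt (fun t => exp (-t / b) - exp (-t / a))
      (expDensity a t - expDensity b t) t :=
    ((hasDerivAt_exp_neg_div b t).sub (hasDerivAt_exp_neg_div a t)).congr_deriv (by ring)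
  have hcont : Continuous fun t => expDensity a t - expDensity b t := by
    unfold expDensity; fun_prop
  rw [intervalIntegral.integral_eq_sub_of_hasDerivAt (fun t _ => hderiv t)
    (hcont.intervalIntegrable _ _)]
  simp

section
variable {a b : ℝ} (ha : 0 < a) (hab : a < b)
include ha hab

lemma crossover_nonneg : 0 ≤ crossover a b := by
  have : 0 < b := ha.trans hab
  have : 0 < b - a := sub_pos.2 hab
  have : 0 ≤ log (b / a) := log_nonneg ((one_le_div ha).2 hab.le)
  unfold crossover
  positivity

lemma expDensity_sub_neg_iff (t : ℝ) :
    expDensity a t - expDensity b t < 0 ↔ crossover a b < t := by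
  have hb : 0 < b := ha.trans hab
  calc expDensity a t - expDensity b t < 0
      ↔ b / a < exp (t * (b - a) / (a * b)) := by
        rw [sub_neg, expDensity, expDensity, one_div_mul_eq_div, one_div_mul_eq_div,
          div_lt_div_iff₀ ha hb, div_lt_iff₀ ha,
          show t * (b - a) / (a * b) = -t / b - -t / a by field_simp; ring, exp_sub,
          div_mul_eq_mul_div, lt_div_iff₀ (exp_pos _), mul_comm b]
    _ ↔ log (b / a) < t * (b - a) / (a * b) := (log_lt_iff_lt_exp (by positivity)).symm
    _ ↔ crossover a b < t := by
        rw [crossover, lt_div_iff₀ (by positivity), div_mul_eq_mul_div,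
          div_lt_iff₀ (sub_pos.2 hab)]
        constructor <;> intro h <;> linarith

lemma setIntegral_max_expDensity_sub_zero :
    ∫ t in Ioi 0, max (expDensity a t - expDensity b t) 0
      = ∫ t in (0)..crossover a b, (expDensity a t - expDensity b t) := by
  have hpos : EqOn (fun t => max (expDensity a t - expDensity b t) 0)
      ((Ioc 0 (crossover a b)).indicator fun t => expDensity a t - expDensity b t) (Ioi 0) := by
    intro t ht
    dsimp only
    by_cases htT : t ≤ crossover a b
    · rw [indicator_of_mem (show t ∈ Ioc 0 (crossover a b) from ⟨ht, htT⟩), max_eq_left]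
      exact not_lt.1 fun h => not_lt.2 htT ((expDensity_sub_neg_iff ha hab t).1 h)
    · rw [indicator_of_notMem fun h => htT h.2, max_eq_right]
      exact ((expDensity_sub_neg_iff ha hab t).2 (not_le.1 htT)).le
  rw [setIntegral_congr_fun measurableSet_Ioi hpos, setIntegral_indicator measurableSet_Ioc,
    inter_eq_self_of_subset_right Ioc_subset_Ioi_self,
    intervalIntegral.integral_of_le (crossover_nonneg ha hab)]

lemma exp_neg_crossover_div (c : ℝ) :
    exp (-crossover a b / c) = (b / a) ^ (-(a * b / (b - a) / c)) := by
  rw [rpow_def_of_pos (div_pos (ha.trans hab) ha), crossover]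
  ring_nf

theorem integral_max_expDensity_sub_zero :
    ∫ t in Ioi 0, max (expDensity a t - expDensity b t) 0
      = (b - a) / b * (b / a) ^ (-a / (b - a)) := by
  have hb : 0 < b := ha.trans hab
  have hba : 0 < b - a := sub_pos.2 hab
  have hexp : -(a * b / (b - a) / a) = -a / (b - a) + -1 := by field_simp; ring
  rw [setIntegral_max_expDensity_sub_zero ha hab, integral_expDensity_sub,
    exp_neg_crossover_div ha hab, exp_neg_crossover_div ha hab, hexp,
    rpow_add (div_pos hb ha), rpow_neg_one, inv_div,
    show a * b / (b - a) / b = a / (b - a) by field_simp, neg_div]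
  field_simp
end

/-- For `μ > ν ≥ 0`,
`∫₀^∞ max{(1/(ν+1))·e^{−t/(ν+1)} − (1/(μ+1))·e^{−t/(μ+1)}, 0} dt
  = ((μ−ν)/(μ+1)) · ((μ+1)/(ν+1))^{−(ν+1)/(μ−ν)}`. -/
theorem stmt_6 (ν μ : ℝ) (hν : 0 ≤ ν) (hμν : ν < μ) :
    ∫ t in Set.Ioi (0 : ℝ),
        max ((1 / (ν + 1)) * Real.exp (-t / (ν + 1)) - (1 / (μ + 1)) * Real.exp (-t / (μ + 1))) 0
      = ((μ - ν) / (μ + 1)) * ((μ + 1) / (ν + 1)) ^ (-(ν + 1) / (μ - ν)) := by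
  have h := integral_max_expDensity_sub_zero (a := ν + 1) (b := μ + 1) (by linarith)
    (by linarith)
  rwa [add_sub_add_right_eq_sub] at h
end

section
/- For all real numbers μ > ν ≥ 0, ∫₀^∞ max{(1/(2ν+1))·e^{−2s/(2ν+1)} − (1/(2μ+1))·e^{−2s/(2μ+1)}, 0}·2 ds = (2(μ−ν)/(2μ+1)) · ((2μ+1)/(2ν+1))^{−(2ν+1)/(2(μ−ν))}. -/
open MeasureTheory

lemma aux_int_exp (c T : ℝ) (hc : c ≠ 0) :
    ∫ s in (0:ℝ)..T, Real.exp (c * s) = (Real.exp (c * T) - 1) / c := by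
  have hd : ∀ s : ℝ, HasDerivAt (fun s => Real.exp (c * s) / c) (Real.exp (c * s)) s := by
    intro s
    have h1 : HasDerivAt (fun s : ℝ => c * s) c s := by
      simpa using (hasDerivAt_id s).const_mul c
    have := h1.exp.div_const c
    simpa [mul_div_cancel_left₀ _ hc, mul_comm] using this
  rw [intervalIntegral.integral_eq_sub_of_hasDerivAt (fun s _ => hd s)
    ((Continuous.intervalIntegrable (by continuity) _ _))]
  rw [mul_zero, Real.exp_zero, sub_div]

lemma aux_main (a b : ℝ) (ha : 0 < a) (hab : a < b) :
    ∫ s in Set.Ioi (0 : ℝ),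
        (max ((1 / a) * Real.exp (-(2 * s) / a) - (1 / b) * Real.exp (-(2 * s) / b)) 0) * 2
      = ((b - a) / b) * (b / a) ^ (-(a / (b - a))) := by
  have hb : 0 < b := ha.trans hab
  have hba : 0 < b - a := sub_pos.mpr hab
  have hba' : (b : ℝ) - a ≠ 0 := ne_of_gt hba
  set L := Real.log (b / a) with hL
  have hL0 : 0 < L := Real.log_pos (by rw [lt_div_iff₀ ha]; linarith)
  set s₀ := a * b * L / (2 * (b - a)) with hs₀
  have hs₀0 : 0 < s₀ := by positivity
  set f := fun s : ℝ =>
    (max ((1 / a) * Real.exp (-(2 * s) / a) - (1 / b) * Real.exp (-(2 * s) / b)) 0) * 2 with hf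
  have hsign : ∀ s : ℝ, (0 ≤ (1 / a) * Real.exp (-(2 * s) / a)
      - (1 / b) * Real.exp (-(2 * s) / b)) ↔ s ≤ s₀ := by
    intro s
    rw [sub_nonneg]
    have h1 : (1 / b) * Real.exp (-(2 * s) / b) = Real.exp (-(2 * s) / b - Real.log b) := by
      rw [Real.exp_sub, Real.exp_log hb]; ring
    have h2 : (1 / a) * Real.exp (-(2 * s) / a) = Real.exp (-(2 * s) / a - Real.log a) := by
      rw [Real.exp_sub, Real.exp_log ha]; ring
    rw [h1, h2, Real.exp_le_exp, hL, Real.log_div (ne_of_gt hb) (ne_of_gt ha)] at *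
    constructor
    · intro h
      rw [hs₀, le_div_iff₀ (by positivity)]
      rw [sub_le_sub_iff, div_add' _ _ _ (ne_of_gt hb), div_add' _ _ _ (ne_of_gt ha),
        div_le_div_iff₀ hb ha] at h
      nlinarith
    · intro h
      rw [hs₀, le_div_iff₀ (by positivity)] at h
      rw [sub_le_sub_iff, div_add' _ _ _ (ne_of_gt hb), div_add' _ _ _ (ne_of_gt ha),
        div_le_div_iff₀ hb ha]
      nlinarith
  have hunion : Set.Ioc (0:ℝ) s₀ ∪ Set.Ioi s₀ = Set.Ioi (0:ℝ) :=
    Set.Ioc_union_Ioi_eq_Ioi hs₀0.le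
  have hzero : Set.EqOn f 0 (Set.Ioi s₀) := by
    intro s hs
    have : ¬ (s ≤ s₀) := not_le.mpr hs
    have hneg := (not_iff_not.mpr (hsign s)).mpr this
    push_neg at hneg
    simp only [hf, Pi.zero_apply]
    rw [max_eq_right hneg.le, zero_mul]
  have heq : Set.EqOn f (fun s => ((1 / a) * Real.exp (-(2 * s) / a)
      - (1 / b) * Real.exp (-(2 * s) / b)) * 2) (Set.Ioc (0:ℝ) s₀) := by
    intro s hs
    have := (hsign s).mpr hs.2
    simp only [hf]
    rw [max_eq_left this]
  have hint1 : IntegrableOn f (Set.Ioc (0:ℝ) s₀) := by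
    apply Continuous.integrableOn_Ioc
    fun_prop
  have hint2 : IntegrableOn f (Set.Ioi s₀) :=
    (integrableOn_congr_fun hzero measurableSet_Ioi).mpr (integrableOn_zero)
  rw [← hunion, setIntegral_union (Set.Ioc_disjoint_Ioi le_rfl) measurableSet_Ioi hint1 hint2]
  rw [setIntegral_congr_fun measurableSet_Ioi hzero,
    setIntegral_congr_fun measurableSet_Ioc heq]
  simp only [integral_zero, add_zero, Pi.zero_apply]
  rw [← intervalIntegral.integral_of_le hs₀0.le]
  have e1 : ∀ s : ℝ, -(2 * s) / a = (-2 / a) * s := by intro s; ring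
  have e2 : ∀ s : ℝ, -(2 * s) / b = (-2 / b) * s := by intro s; ring
  simp only [e1, e2]
  have i1 : IntervalIntegrable (fun s => (1 / a) * Real.exp (-2 / a * s)) volume 0 s₀ :=
    Continuous.intervalIntegrable (by fun_prop) _ _
  have i2 : IntervalIntegrable (fun s => (1 / b) * Real.exp (-2 / b * s)) volume 0 s₀ :=
    Continuous.intervalIntegrable (by fun_prop) _ _
  have key : (∫ s in (0:ℝ)..s₀, ((1 / a) * Real.exp (-2 / a * s)
      - (1 / b) * Real.exp (-2 / b * s)) * 2)
      = Real.exp (-2 / b * s₀) - Real.exp (-2 / a * s₀) := by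
    rw [intervalIntegral.integral_mul_const, intervalIntegral.integral_sub i1 i2,
      intervalIntegral.integral_const_mul, intervalIntegral.integral_const_mul,
      aux_int_exp _ _ (div_ne_zero (by norm_num) (ne_of_gt ha)),
      aux_int_exp _ _ (div_ne_zero (by norm_num) (ne_of_gt hb))]
    field_simp
    ring
  rw [key]
  have hx1 : -2 / b * s₀ = -(a / (b - a)) * L := by
    rw [hs₀]; field_simp
  have hx2 : -2 / a * s₀ = -(a / (b - a)) * L + (-L) := by
    rw [hs₀]; field_simp; ring
  rw [hx1, hx2, Real.exp_add, Real.exp_neg, hL, Real.exp_log (by positivity)]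
  rw [Real.rpow_def_of_pos (by positivity : (0:ℝ) < b / a), ← hL]
  have : (b / a)⁻¹ = a / b := by rw [inv_div]
  rw [this]
  have hexp : Real.exp (-(a / (b - a)) * L) = Real.exp (-(a / (b - a)) * L) := rfl
  field_simp

/-- For `μ > ν ≥ 0`,
`∫₀^∞ max{(1/(2ν+1))·e^{−2s/(2ν+1)} − (1/(2μ+1))·e^{−2s/(2μ+1)}, 0}·2 ds
  = (2(μ−ν)/(2μ+1)) · ((2μ+1)/(2ν+1))^{−(2ν+1)/(2(μ−ν))}`. -/
theorem stmt_7 (ν μ : ℝ) (hν : 0 ≤ ν) (hμν : ν < μ) :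
    ∫ s in Set.Ioi (0 : ℝ),
        (max ((1 / (2 * ν + 1)) * Real.exp (-(2 * s) / (2 * ν + 1))
            - (1 / (2 * μ + 1)) * Real.exp (-(2 * s) / (2 * μ + 1))) 0) * 2
      = (2 * (μ - ν) / (2 * μ + 1))
          * ((2 * μ + 1) / (2 * ν + 1)) ^ (-(2 * ν + 1) / (2 * (μ - ν))) := by
  have ha : (0:ℝ) < 2 * ν + 1 := by linarith
  have hab : 2 * ν + 1 < 2 * μ + 1 := by linarith
  have := aux_main (2 * ν + 1) (2 * μ + 1) ha hab
  rw [this]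
  have h1 : (2 * μ + 1) - (2 * ν + 1) = 2 * (μ - ν) := by ring
  rw [h1]
  congr 1
  rw [neg_div]
end

section
/- For all real numbers μ > ν ≥ 0, (1/√π)·∫_{−∞}^{+∞} max{(2ν+1)^{−1/2}·e^{−x²/(2ν+1)} − (2μ+1)^{−1/2}·e^{−x²/(2μ+1)}, 0} dx = erf(√((2μ+1)/(4(μ−ν)) · ln((2μ+1)/(2ν+1)))) − erf(√((2ν+1)/(4(μ−ν)) · ln((2μ+1)/(2ν+1)))). -/
open MeasureTheory Real

/-- The error function `erf(z) = (2/√π)·∫₀^z e^{−u²} du`. -/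
noncomputable def erf (z : ℝ) : ℝ := (2 / Real.sqrt π) * ∫ u in (0 : ℝ)..z, Real.exp (-u ^ 2)

/-!
The difference `c₁^{-1/2} e^{-x²/c₁} - c₂^{-1/2} e^{-x²/c₂}` (`c₁ < c₂`) of two centred Gaussian
profiles is nonnegative exactly on `|x| ≤ x₀`, where comparing logarithms gives
`x₀² = c₁ c₂ log(c₂/c₁) / (2(c₂ - c₁))`. So the integral of its positive part is the integral of the
difference over `[-x₀, x₀]`, and after the substitution `u = x/√c` each profile contributes
`√π · erf(x₀/√c)`.
-/

noncomputable def gaussianProfile (c x : ℝ) : ℝ := c ^ (-(1 : ℝ) / 2) * exp (-x ^ 2 / c)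

theorem integral_exp_neg_sq_symm (z : ℝ) :
    ∫ u in -z..z, exp (-u ^ 2) = √π * erf z := by
  have hint (a b : ℝ) : IntervalIntegrable (fun u => exp (-u ^ 2)) volume a b :=
    (by fun_prop : Continuous fun u : ℝ => exp (-u ^ 2)).intervalIntegrable a b
  have hneg : ∫ u in -z..0, exp (-u ^ 2) = ∫ u in (0 : ℝ)..z, exp (-u ^ 2) := by
    have h := intervalIntegral.integral_comp_neg (fun u => exp (-u ^ 2)) (a := 0) (b := z)
    simp only [neg_zero, neg_sq] at h
    exact h.symm
  rw [← intervalIntegral.integral_add_adjacent_intervals (hint (-z) 0) (hint 0 z), hneg, erf]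
  field_simp
  ring

theorem integral_gaussianProfile_symm {c : ℝ} (hc : 0 < c) (z : ℝ) :
    ∫ x in -z..z, gaussianProfile c x = √π * erf (z / √c) := by
  have hsc : 0 < √c := sqrt_pos.mpr hc
  have hscale (x : ℝ) : exp (-x ^ 2 / c) = exp (-(x / √c) ^ 2) := by
    rw [div_pow, sq_sqrt hc.le, neg_div]
  have hrpow : c ^ (-(1 : ℝ) / 2) = (√c)⁻¹ := by
    rw [show -(1 : ℝ) / 2 = -(1 / 2) by ring, rpow_neg hc.le, sqrt_eq_rpow]
  simp only [gaussianProfile, hscale, intervalIntegral.integral_const_mul]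
  rw [intervalIntegral.integral_comp_div (fun u => exp (-u ^ 2)) hsc.ne', neg_div √c z,
    integral_exp_neg_sq_symm, smul_eq_mul, hrpow]
  field_simp

theorem gaussianProfile_eq_exp {c : ℝ} (hc : 0 < c) (x : ℝ) :
    gaussianProfile c x = exp (-(log c / 2) - x ^ 2 / c) := by
  rw [gaussianProfile, rpow_def_of_pos hc, ← exp_add]
  ring_nf

theorem gaussianProfile_sub_nonneg_iff {a b : ℝ} (ha : 0 < a) (hab : a < b) (x : ℝ) :
    0 ≤ gaussianProfile a x - gaussianProfile b x ↔
      x ^ 2 ≤ a * b * log (b / a) / (2 * (b - a)) := by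
  have hb : 0 < b := ha.trans hab
  have hgap : (-(log a / 2) - x ^ 2 / a) - (-(log b / 2) - x ^ 2 / b)
      = (a * b * log (b / a) - x ^ 2 * (2 * (b - a))) / (2 * a * b) := by
    rw [log_div hb.ne' ha.ne']
    field_simp
    ring
  rw [sub_nonneg, gaussianProfile_eq_exp ha, gaussianProfile_eq_exp hb, exp_le_exp, ← sub_nonneg,
    hgap, le_div_iff₀ (by positivity), zero_mul, sub_nonneg, le_div_iff₀ (by linarith)]

theorem integral_max_zero_of_nonneg_iff_abs_le {f : ℝ → ℝ} {r : ℝ} (hr : 0 ≤ r)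
    (hf : ∀ x, 0 ≤ f x ↔ |x| ≤ r) :
    ∫ x, max (f x) 0 = ∫ x in -r..r, f x := by
  have hind : (fun x => max (f x) 0) = (Set.Icc (-r) r).indicator f := funext fun x => by
    have hmem : x ∈ Set.Icc (-r) r ↔ |x| ≤ r := abs_le.symm
    by_cases hx : |x| ≤ r
    · rw [Set.indicator_of_mem (hmem.mpr hx), max_eq_left ((hf x).mpr hx)]
    · rw [Set.indicator_of_notMem (mt hmem.mp hx),
        max_eq_right (le_of_not_ge (mt (hf x).mp hx))]
  rw [hind, integral_indicator measurableSet_Icc, integral_Icc_eq_integral_Ioc,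
    intervalIntegral.integral_of_le (by linarith)]

theorem integral_max_gaussianProfile_sub_zero {a b : ℝ} (ha : 0 < a) (hab : a < b) :
    (1 / √π) * ∫ x, max (gaussianProfile a x - gaussianProfile b x) 0
      = erf (√(b / (2 * (b - a)) * log (b / a))) - erf (√(a / (2 * (b - a)) * log (b / a))) := by
  have hb : 0 < b := ha.trans hab
  have hL : 0 < log (b / a) := log_pos ((one_lt_div ha).mpr hab)
  have hba : 0 < b - a := sub_pos.mpr hab
  set s := a * b * log (b / a) / (2 * (b - a)) with hs_def
  have hs : 0 ≤ s := by positivity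
  have hsign (x : ℝ) : 0 ≤ gaussianProfile a x - gaussianProfile b x ↔ |x| ≤ √s := by
    rw [gaussianProfile_sub_nonneg_iff ha hab, le_sqrt (abs_nonneg x) hs, sq_abs]
  have hint (c : ℝ) : IntervalIntegrable (gaussianProfile c) volume (-√s) √s :=
    (by unfold gaussianProfile; fun_prop : Continuous (gaussianProfile c)).intervalIntegrable _ _
  have hsa : s / a = b / (2 * (b - a)) * log (b / a) := by
    rw [hs_def]; field_simp
  have hsb : s / b = a / (2 * (b - a)) * log (b / a) := by
    rw [hs_def]; field_simp
  rw [integral_max_zero_of_nonneg_iff_abs_le (sqrt_nonneg s) hsign,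
    intervalIntegral.integral_sub (hint a) (hint b), integral_gaussianProfile_symm ha,
    integral_gaussianProfile_symm hb, ← sqrt_div' _ ha.le, ← sqrt_div' _ hb.le, hsa, hsb]
  field_simp

/-- For `μ > ν ≥ 0`,
`(1/√π)·∫_ℝ max{(2ν+1)^{−1/2}·e^{−x²/(2ν+1)} − (2μ+1)^{−1/2}·e^{−x²/(2μ+1)}, 0} dx
  = erf(√((2μ+1)/(4(μ−ν))·ln((2μ+1)/(2ν+1)))) − erf(√((2ν+1)/(4(μ−ν))·ln((2μ+1)/(2ν+1))))`. -/
theorem stmt_8 (ν μ : ℝ) (hν : 0 ≤ ν) (hμν : ν < μ) :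
    (1 / Real.sqrt π) * ∫ x : ℝ,
        max ((2 * ν + 1) ^ (-(1 : ℝ) / 2) * Real.exp (-x ^ 2 / (2 * ν + 1))
          - (2 * μ + 1) ^ (-(1 : ℝ) / 2) * Real.exp (-x ^ 2 / (2 * μ + 1))) 0
      = erf (Real.sqrt ((2 * μ + 1) / (4 * (μ - ν)) * Real.log ((2 * μ + 1) / (2 * ν + 1))))
        - erf (Real.sqrt ((2 * ν + 1) / (4 * (μ - ν)) * Real.log ((2 * μ + 1) / (2 * ν + 1)))) := by
  have h := integral_max_gaussianProfile_sub_zero (a := 2 * ν + 1) (b := 2 * μ + 1)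
    (by linarith) (by linarith)
  rwa [show 2 * ((2 * μ + 1) - (2 * ν + 1)) = 4 * (μ - ν) by ring] at h
end

section
/- Let μ > ν ≥ 0. Then Σ_{k=0}^{∞} max{ν^k/(ν+1)^{k+1} − μ^k/(μ+1)^{k+1}, 0} ≤ (e/2) · ||τν − τμ||_het, where (1/2)||τν − τμ||_het = ((μ−ν)/(μ+1))·((μ+1)/(ν+1))^{−(ν+1)/(μ−ν)}. Equivalently, in the variable t = (ν+1)/(μ+1) ∈ (0,1), the total variation distance between the geometric distributions of means ν and μ is at most e·(1−t)·t^{t/(1−t)}. -/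
/-- For `μ > ν ≥ 0`, the half total variation distance between geometric distributions of
means `ν` and `μ` is at most `e/2` times the heterodyne norm
`‖τν − τμ‖_het = 2·((μ−ν)/(μ+1))·((μ+1)/(ν+1))^{−(ν+1)/(μ−ν)}`. -/
theorem stmt_9 (ν μ : ℝ) (hν : 0 ≤ ν) (hμν : ν < μ) :
    ∑' k : ℕ, max (ν ^ k / (ν + 1) ^ (k + 1) - μ ^ k / (μ + 1) ^ (k + 1)) 0
      ≤ Real.exp 1 * (((μ - ν) / (μ + 1)) * ((μ + 1) / (ν + 1)) ^ (-(ν + 1) / (μ - ν))) := by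
  have hν1 : (0:ℝ) < ν + 1 := by linarith
  have hμ1 : (0:ℝ) < μ + 1 := by linarith
  have hd : (0:ℝ) < μ - ν := by linarith
  set a : ℝ := ν / (ν + 1) with ha
  have ha0 : 0 ≤ a := div_nonneg hν hν1.le
  have ha1 : a < 1 := (div_lt_one hν1).2 (by linarith)
  set C : ℝ := (μ - ν) / ((μ + 1) * (ν + 1)) with hC
  have hC0 : 0 < C := div_pos hd (by positivity)
  -- pointwise bound on each term
  have key : ∀ k : ℕ, max (ν ^ k / (ν + 1) ^ (k + 1) - μ ^ k / (μ + 1) ^ (k + 1)) 0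
      ≤ C * a ^ k := by
    intro k
    have hak : (0:ℝ) ≤ a ^ k := pow_nonneg ha0 k
    refine max_le ?_ (by positivity)
    have h1 : ν ^ k / (ν + 1) ^ (k + 1) = (1 / (ν + 1)) * a ^ k := by
      rw [ha, div_pow, div_mul_div_comm, one_mul, ← pow_succ']
    have hb : a ≤ μ / (μ + 1) := by
      rw [ha, div_le_div_iff₀ hν1 hμ1]; nlinarith
    have h2 : (1 / (μ + 1)) * a ^ k ≤ μ ^ k / (μ + 1) ^ (k + 1) := by
      have hpow : a ^ k ≤ (μ / (μ + 1)) ^ k := pow_le_pow_left₀ ha0 hb k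
      have h3 : μ ^ k / (μ + 1) ^ (k + 1) = (1 / (μ + 1)) * (μ / (μ + 1)) ^ k := by
        rw [div_pow, div_mul_div_comm, one_mul, ← pow_succ']
      rw [h3]
      have hpos : (0:ℝ) < 1 / (μ + 1) := by positivity
      nlinarith
    have hCsplit : (1 / (ν + 1)) - (1 / (μ + 1)) = C := by
      rw [hC, div_sub_div _ _ hν1.ne' hμ1.ne',
        div_eq_div_iff (by positivity) (by positivity)]
      ring
    have hstep : ν ^ k / (ν + 1) ^ (k + 1) - μ ^ k / (μ + 1) ^ (k + 1)
        ≤ (1 / (ν + 1)) * a ^ k - (1 / (μ + 1)) * a ^ k := by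
      rw [h1]; linarith
    calc ν ^ k / (ν + 1) ^ (k + 1) - μ ^ k / (μ + 1) ^ (k + 1)
        ≤ (1 / (ν + 1)) * a ^ k - (1 / (μ + 1)) * a ^ k := hstep
      _ = ((1 / (ν + 1)) - (1 / (μ + 1))) * a ^ k := by ring
      _ = C * a ^ k := by rw [hCsplit]
  -- summability
  have hsumg : Summable (fun k : ℕ => C * a ^ k) :=
    (summable_geometric_of_lt_one ha0 ha1).mul_left C
  have hnonneg : ∀ k : ℕ,
      0 ≤ max (ν ^ k / (ν + 1) ^ (k + 1) - μ ^ k / (μ + 1) ^ (k + 1)) 0 :=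
    fun k => le_max_right _ 0
  have hsumf : Summable (fun k : ℕ =>
      max (ν ^ k / (ν + 1) ^ (k + 1) - μ ^ k / (μ + 1) ^ (k + 1)) 0) :=
    Summable.of_nonneg_of_le hnonneg key hsumg
  have hle1 : ∑' k : ℕ, max (ν ^ k / (ν + 1) ^ (k + 1) - μ ^ k / (μ + 1) ^ (k + 1)) 0
      ≤ ∑' k : ℕ, C * a ^ k := Summable.tsum_le_tsum key hsumf hsumg
  have hgeom : ∑' k : ℕ, C * a ^ k = C * (1 - a)⁻¹ := by
    rw [tsum_mul_left, tsum_geometric_of_lt_one ha0 ha1]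
  have h1a : 1 - a = 1 / (ν + 1) := by
    rw [ha, eq_div_iff hν1.ne', sub_mul, div_mul_cancel₀ _ hν1.ne']; ring
  have hCa : C * (1 - a)⁻¹ = (μ - ν) / (μ + 1) := by
    rw [h1a, hC, one_div, inv_inv, div_mul_eq_mul_div,
      div_eq_div_iff (by positivity) hμ1.ne']
    ring
  -- the final elementary inequality : (μ-ν)/(μ+1) ≤ e * ((μ-ν)/(μ+1)) * R
  have hx : (0:ℝ) < (μ + 1) / (ν + 1) := by positivity
  have hR : ((μ + 1) / (ν + 1) : ℝ) ^ (-(ν + 1) / (μ - ν))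
      = Real.exp (Real.log ((μ + 1) / (ν + 1)) * (-(ν + 1) / (μ - ν))) :=
    Real.rpow_def_of_pos hx _
  have hlog : Real.log ((μ + 1) / (ν + 1)) ≤ (μ - ν) / (ν + 1) := by
    have h := Real.log_le_sub_one_of_pos hx
    have heq : (μ + 1) / (ν + 1) - 1 = (μ - ν) / (ν + 1) := by
      rw [eq_div_iff hν1.ne', sub_mul, div_mul_cancel₀ _ hν1.ne']; ring
    linarith [heq ▸ h]
  have hexp : (1:ℝ) ≤ Real.exp 1 * ((μ + 1) / (ν + 1)) ^ (-(ν + 1) / (μ - ν)) := by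
    rw [hR, ← Real.exp_add]
    have h1 : Real.log ((μ + 1) / (ν + 1)) * ((ν + 1) / (μ - ν))
        ≤ ((μ - ν) / (ν + 1)) * ((ν + 1) / (μ - ν)) :=
      mul_le_mul_of_nonneg_right hlog (by positivity)
    have h2 : ((μ - ν) / (ν + 1)) * ((ν + 1) / (μ - ν)) = 1 := by
      rw [div_mul_div_comm, div_eq_one_iff_eq (by positivity)]; ring
    have h3 : Real.log ((μ + 1) / (ν + 1)) * (-(ν + 1) / (μ - ν))
        = -(Real.log ((μ + 1) / (ν + 1)) * ((ν + 1) / (μ - ν))) := by ring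
    have harg : 0 ≤ 1 + Real.log ((μ + 1) / (ν + 1)) * (-(ν + 1) / (μ - ν)) := by
      rw [h3]; linarith
    calc (1:ℝ) = Real.exp 0 := Real.exp_zero.symm
      _ ≤ Real.exp (1 + Real.log ((μ + 1) / (ν + 1)) * (-(ν + 1) / (μ - ν))) :=
          Real.exp_le_exp.2 (by linarith)
  have hfin : (μ - ν) / (μ + 1)
      ≤ Real.exp 1 * (((μ - ν) / (μ + 1)) * ((μ + 1) / (ν + 1)) ^ (-(ν + 1) / (μ - ν))) := by
    have hpos : (0:ℝ) ≤ (μ - ν) / (μ + 1) := by positivity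
    calc (μ - ν) / (μ + 1) = ((μ - ν) / (μ + 1)) * 1 := (mul_one _).symm
      _ ≤ ((μ - ν) / (μ + 1)) * (Real.exp 1 * ((μ + 1) / (ν + 1)) ^ (-(ν + 1) / (μ - ν))) :=
          mul_le_mul_of_nonneg_left hexp hpos
      _ = Real.exp 1 * (((μ - ν) / (μ + 1)) * ((μ + 1) / (ν + 1)) ^ (-(ν + 1) / (μ - ν))) := by
          ring
  calc ∑' k : ℕ, max (ν ^ k / (ν + 1) ^ (k + 1) - μ ^ k / (μ + 1) ^ (k + 1)) 0
      ≤ ∑' k : ℕ, C * a ^ k := hle1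
    _ = C * (1 - a)⁻¹ := hgeom
    _ = (μ - ν) / (μ + 1) := hCa
    _ ≤ _ := hfin
end

section
/- For every λ ∈ (0,1), ∫₀^∞ max{(1+λ)²·e^{−2(1+λ)u/(1−λ)} − (1−λ)²·e^{−2(1−λ)u/(1+λ)}, 0} du = 2λ · ((1−λ)/(1+λ))^{(1+λ²)/(2λ)}. -/
/-!
The integrand is `k (a e^{-a u} - b e^{-b u})` with `k = (1 - λ²)/2`, `a = 2(1+λ)/(1-λ)` and
`b = 2(1-λ)/(1+λ)`. For `b < a` it is nonnegative exactly up to `u₀ = log (a/b) / (a - b)`,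
so the integral of its positive part is `∫₀^{u₀}`, which equals
`k (e^{-b u₀} - e^{-a u₀}) = k ((b/a)^{b/(a-b)} - (b/a)^{a/(a-b)})`.
With `ρ = (1-λ)/(1+λ)` one has `b/a = ρ²` and the two exponents become `c ∓ 1` after doubling,
where `c = (1+λ²)/(2λ)`.
-/

open MeasureTheory Set Real

theorem setIntegral_max_zero_eq_of_nonneg_iff {μ : Measure ℝ} {s : Set ℝ} {f : ℝ → ℝ} {u₀ : ℝ}
    (hf : ∀ u, 0 ≤ f u ↔ u ≤ u₀) :
    ∫ u in s, max (f u) 0 ∂μ = ∫ u in s ∩ Iic u₀, f u ∂μ := by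
  have hmax : (fun u => max (f u) 0) = (Iic u₀).indicator f := by
    ext u
    by_cases hu : u ≤ u₀
    · rw [indicator_of_mem (mem_Iic.2 hu), max_eq_left ((hf u).2 hu)]
    · rw [indicator_of_notMem (notMem_Iic.2 (not_le.1 hu)),
        max_eq_right (le_of_not_ge (mt (hf u).1 hu))]
  rw [hmax, setIntegral_indicator measurableSet_Iic]

theorem mul_exp_neg_le_mul_exp_neg_iff {a b : ℝ} (hb : 0 < b) (hab : b < a) (u : ℝ) :
    b * exp (-(b * u)) ≤ a * exp (-(a * u)) ↔ u ≤ log (a / b) / (a - b) := by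
  have hsplit : b * exp (-(b * u)) = exp ((a - b) * u) * b * exp (-(a * u)) := by
    rw [mul_comm (exp _), mul_assoc, ← exp_add]; ring_nf
  rw [hsplit, mul_le_mul_iff_left₀ (exp_pos _), le_div_iff₀ (sub_pos.2 hab), mul_comm u,
    le_log_iff_exp_le (div_pos (hb.trans hab) hb), le_div_iff₀ hb]

theorem integral_Ioc_mul_exp_neg_sub (k a b t : ℝ) (ht : 0 ≤ t) :
    ∫ u in Ioc 0 t, (k * a * exp (-(a * u)) - k * b * exp (-(b * u))) =
      k * (exp (-(b * t)) - exp (-(a * t))) := by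
  have hderiv : ∀ u, HasDerivAt (fun u => k * (exp (-(b * u)) - exp (-(a * u))))
      (k * a * exp (-(a * u)) - k * b * exp (-(b * u))) u := by
    intro u
    have hexp (c : ℝ) : HasDerivAt (fun u => exp (-(c * u))) (exp (-(c * u)) * -c) u := by
      simpa using (((hasDerivAt_id u).const_mul c).neg).exp
    exact (((hexp b).sub (hexp a)).const_mul k).congr_deriv (by ring)
  rw [← intervalIntegral.integral_of_le ht,
    intervalIntegral.integral_eq_sub_of_hasDerivAt (fun u _ => hderiv u)
      (by apply Continuous.intervalIntegrable; fun_prop)]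
  simp

theorem exp_neg_mul_log_div_div_sub {a b : ℝ} (ha : 0 < a) (hb : 0 < b) (c : ℝ) :
    exp (-(c * (log (a / b) / (a - b)))) = (b / a) ^ (c / (a - b)) := by
  rw [rpow_def_of_pos (div_pos hb ha), ← inv_div a b, log_inv]
  ring_nf

theorem integral_Ioi_max_mul_exp_neg_sub {k a b : ℝ} (hk : 0 < k) (hb : 0 < b) (hab : b < a) :
    ∫ u in Ioi 0, max (k * a * exp (-(a * u)) - k * b * exp (-(b * u))) 0 =
      k * ((b / a) ^ (b / (a - b)) - (b / a) ^ (a / (a - b))) := by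
  set u₀ := log (a / b) / (a - b)
  have hu₀ : 0 < u₀ := div_pos (log_pos ((one_lt_div hb).2 hab)) (sub_pos.2 hab)
  have hsign : ∀ u, 0 ≤ k * a * exp (-(a * u)) - k * b * exp (-(b * u)) ↔ u ≤ u₀ := by
    intro u
    rw [mul_assoc, mul_assoc, ← mul_sub, mul_nonneg_iff_of_pos_left hk, sub_nonneg]
    exact mul_exp_neg_le_mul_exp_neg_iff hb hab u
  have ha : 0 < a := hb.trans hab
  rw [setIntegral_max_zero_eq_of_nonneg_iff hsign, Ioi_inter_Iic,
    integral_Ioc_mul_exp_neg_sub k a b u₀ hu₀.le, exp_neg_mul_log_div_div_sub ha hb,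
    exp_neg_mul_log_div_div_sub ha hb]

/-- For `λ ∈ (0,1)`,
`∫₀^∞ max{(1+λ)²·e^{−2(1+λ)u/(1−λ)} − (1−λ)²·e^{−2(1−λ)u/(1+λ)}, 0} du
  = 2λ · ((1−λ)/(1+λ))^{(1+λ²)/(2λ)}`. -/
theorem stmt_10 (l : ℝ) (hl : l ∈ Set.Ioo (0 : ℝ) 1) :
    ∫ u in Set.Ioi (0 : ℝ),
        max ((1 + l) ^ 2 * Real.exp (-(2 * (1 + l) * u) / (1 - l))
          - (1 - l) ^ 2 * Real.exp (-(2 * (1 - l) * u) / (1 + l))) 0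
      = 2 * l * ((1 - l) / (1 + l)) ^ ((1 + l ^ 2) / (2 * l)) := by
  obtain ⟨hl₀, hl₁⟩ := hl
  have hm : 0 < 1 - l := sub_pos.2 hl₁
  have hp : 0 < 1 + l := by linarith
  set ρ := (1 - l) / (1 + l)
  set c := (1 + l ^ 2) / (2 * l)
  set k := (1 - l ^ 2) / 2
  set a := 2 * (1 + l) / (1 - l)
  set b := 2 * (1 - l) / (1 + l)
  have hρ : 0 < ρ := div_pos hm hp
  have hab : b < a := by
    rw [div_lt_div_iff₀ hp hm]; nlinarith
  have hba : b / a = ρ ^ 2 := by simp only [a, b, ρ]; field_simp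
  have hsub : a - b = 8 * l / ((1 - l) * (1 + l)) := by simp only [a, b]; field_simp; ring
  have hexp_b : 2 * (b / (a - b)) = c - 1 := by rw [hsub]; simp only [b, c]; field_simp; ring
  have hexp_a : 2 * (a / (a - b)) = c + 1 := by rw [hsub]; simp only [a, c]; field_simp; ring
  have hintegrand (u : ℝ) :
      (1 + l) ^ 2 * exp (-(2 * (1 + l) * u) / (1 - l))
        - (1 - l) ^ 2 * exp (-(2 * (1 - l) * u) / (1 + l)) =
      k * a * exp (-(a * u)) - k * b * exp (-(b * u)) := by
    simp only [k, a, b]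
    congr 2 <;> field_simp <;> ring
  calc _ = ∫ u in Ioi 0, max (k * a * exp (-(a * u)) - k * b * exp (-(b * u))) 0 := by
        simp only [hintegrand]
    _ = k * ((b / a) ^ (b / (a - b)) - (b / a) ^ (a / (a - b))) :=
        integral_Ioi_max_mul_exp_neg_sub (div_pos (by nlinarith) two_pos) (by positivity) hab
    _ = k * (ρ ^ (c - 1) - ρ ^ (c + 1)) := by
        rw [hba, ← rpow_natCast_mul hρ.le, ← rpow_natCast_mul hρ.le, Nat.cast_ofNat, hexp_a,
          hexp_b]
    _ = _ := by
        rw [rpow_sub_one hρ.ne', rpow_add_one hρ.ne']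
        simp only [k, ρ]
        field_simp
        ring
end

section
/- The function λ ↦ 2·((1−λ)/(1+λ))^{(1+λ²)/(2λ)} on (0,1) tends to 0 as λ → 1⁻, and moreover equals (1−λ) + O((1−λ)²) as λ → 1⁻. -/
open Filter Asymptotics

/-- The function `λ ↦ 2·((1−λ)/(1+λ))^{(1+λ²)/(2λ)}` tends to `0` as `λ → 1⁻`, and
equals `(1−λ) + O((1−λ)²)` as `λ → 1⁻`. -/
theorem stmt_12 :
    Tendsto (fun l : ℝ => 2 * ((1 - l) / (1 + l)) ^ ((1 + l ^ 2) / (2 * l)))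
        (nhdsWithin 1 (Set.Iio 1)) (nhds 0) ∧
      (fun l : ℝ => 2 * ((1 - l) / (1 + l)) ^ ((1 + l ^ 2) / (2 * l)) - (1 - l))
        =O[nhdsWithin 1 (Set.Iio 1)] fun l : ℝ => (1 - l) ^ 2 := by
  have hO : (fun l : ℝ => 2 * ((1 - l) / (1 + l)) ^ ((1 + l ^ 2) / (2 * l)) - (1 - l))
      =O[nhdsWithin 1 (Set.Iio 1)] fun l : ℝ => (1 - l) ^ 2 := by
    rw [isBigO_iff]
    refine ⟨6, ?_⟩
    have hmem : Set.Ioo (2/3 : ℝ) 1 ∈ nhdsWithin 1 (Set.Iio 1) :=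
      Ioo_mem_nhdsLT_of_mem (by norm_num)
    filter_upwards [hmem] with l hl
    obtain ⟨hl23, hl1⟩ := hl
    have hl0 : (0 : ℝ) < l := by linarith
    have ht : (0 : ℝ) < 1 - l := by linarith
    have ht3 : 1 - l ≤ 1/3 := by linarith
    have h1l : (0 : ℝ) < 1 + l := by linarith
    have hb : (0 : ℝ) < (1 - l) / (1 + l) := div_pos ht h1l
    set b : ℝ := (1 - l) / (1 + l) with hbdef
    set δ : ℝ := (1 - l)^2 / (2 * l) with hδdef
    set x : ℝ := Real.log (2 / (1 + l)) + δ * Real.log b with hxdef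
    -- key identity
    have hp : (1 + l ^ 2) / (2 * l) = 1 + δ := by
      rw [hδdef]; field_simp; ring
    have hkey : 2 * b ^ ((1 + l ^ 2) / (2 * l)) = (1 - l) * Real.exp x := by
      have hexpand : Real.log b * (1 + δ) = δ * Real.log b + Real.log b := by ring
      rw [Real.rpow_def_of_pos hb, hp, hexpand, Real.exp_add, hxdef, Real.exp_add]
      rw [Real.exp_log (by positivity : (0:ℝ) < 2 / (1 + l)), Real.exp_log hb]
      rw [hbdef]
      field_simp
    -- bounds on x
    have hlogA_nonneg : 0 ≤ Real.log (2 / (1 + l)) := by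
      apply Real.log_nonneg
      rw [le_div_iff₀ h1l]; linarith
    have hlogA_le : Real.log (2 / (1 + l)) ≤ 1 - l := by
      have := Real.log_le_sub_one_of_pos (by positivity : (0:ℝ) < 2 / (1 + l))
      have h2 : 2 / (1 + l) - 1 ≤ 1 - l := by
        rw [div_sub_one (by linarith : (1:ℝ) + l ≠ 0), div_le_iff₀ h1l]
        nlinarith
      linarith
    have hlogb_neg : Real.log b < 0 := by
      apply Real.log_neg hb
      rw [hbdef, div_lt_one h1l]; linarith
    have hδ_nonneg : 0 ≤ δ := by positivity
    have hy_nonpos : δ * Real.log b ≤ 0 := mul_nonpos_of_nonneg_of_nonpos hδ_nonneg hlogb_neg.le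
    have hy_ge : -(1 - l) ≤ δ * Real.log b := by
      -- -log b = log b⁻¹ ≤ b⁻¹ - 1 = (1+l)/(1-l) - 1 = 2l/(1-l)
      have hbinv : b⁻¹ = (1 + l) / (1 - l) := by
        rw [hbdef, inv_div]
      have h1 : -Real.log b ≤ (1 + l) / (1 - l) - 1 := by
        have := Real.log_le_sub_one_of_pos (by positivity : (0:ℝ) < b⁻¹)
        rw [Real.log_inv, hbinv] at this
        linarith
      have h2 : (1 + l) / (1 - l) - 1 = 2 * l / (1 - l) := by
        rw [div_sub_one (by linarith : (1:ℝ) - l ≠ 0)]; ring_nf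
      have h3 : δ * (-Real.log b) ≤ δ * (2 * l / (1 - l)) := by
        apply mul_le_mul_of_nonneg_left _ hδ_nonneg
        rw [← h2]; exact h1
      have h4 : δ * (2 * l / (1 - l)) = 1 - l := by
        rw [hδdef]
        field_simp
      nlinarith
    have hx_abs : |x| ≤ 2 * (1 - l) := by
      rw [abs_le]
      constructor
      · rw [hxdef]; linarith
      · rw [hxdef]; linarith
    have hx_le1 : |x| ≤ 1 := by linarith
    have hexp := Real.abs_exp_sub_one_le hx_le1
    -- conclude
    rw [hkey]
    have : (1 - l) * Real.exp x - (1 - l) = (1 - l) * (Real.exp x - 1) := by ring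
    rw [this, Real.norm_eq_abs, Real.norm_eq_abs, abs_mul,
      abs_of_pos ht, abs_of_pos (pow_pos ht 2)]
    nlinarith [abs_nonneg x, abs_nonneg (Real.exp x - 1)]
  refine ⟨?_, hO⟩
  have hsq : Tendsto (fun l : ℝ => (1 - l) ^ 2) (nhdsWithin 1 (Set.Iio 1)) (nhds 0) := by
    have : Tendsto (fun l : ℝ => (1 - l) ^ 2) (nhds 1) (nhds 0) := by
      have hc : Continuous (fun l : ℝ => (1 - l) ^ 2) := by continuity
      have := hc.tendsto (1 : ℝ)
      simpa using this
    exact this.mono_left nhdsWithin_le_nhds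
  have hlin : Tendsto (fun l : ℝ => 1 - l) (nhdsWithin 1 (Set.Iio 1)) (nhds 0) := by
    have : Tendsto (fun l : ℝ => 1 - l) (nhds 1) (nhds 0) := by
      have hc : Continuous (fun l : ℝ => 1 - l) := by continuity
      have := hc.tendsto (1 : ℝ)
      simpa using this
    exact this.mono_left nhdsWithin_le_nhds
  have hdiff := hO.trans_tendsto hsq
  have := hdiff.add hlin
  simpa using this
end

section
/- For every λ ∈ [0,1) and x ≥ 0, one has (1−λ²)·e^{−x/2}·Σ_{n=0}^∞ λ^{2n}·L_{2n}(x) = (1/2)·((1+λ)·e^{−((1+λ)/(1−λ))·x/2} + (1−λ)·e^{−((1−λ)/(1+λ))·x/2}), where L_n denotes the nth Laguerre polynomial. -/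
/-- The `n`th (simple) Laguerre polynomial, `L_n(x) = Σ_{k=0}^n C(n,k)·(−x)^k/k!`. -/
noncomputable def laguerre (n : ℕ) (x : ℝ) : ℝ :=
  ∑ k ∈ Finset.range (n + 1), (n.choose k : ℝ) * (-x) ^ k / (Nat.factorial k : ℝ)

/-!
Expanding `L_n(x) = Σ_k C(n,k) (-x)^k / k!` turns `Σ_n t^n L_n(x)` into an absolutely convergent
double series; summing over `n` first gives the exponential series
`Σ_k t^k (1-t)^{-(k+1)} (-x)^k / k!`, whence the generating function `(1-t)⁻¹ e^{-tx/(1-t)}`.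
Averaging it at `t = λ` and `t = -λ` keeps exactly the even-indexed terms, and the two
exponentials combine with `e^{-x/2}` into the right-hand side.
-/

open Finset Real
open scoped Nat

lemma hasSum_choose_mul_pow {𝕜 : Type*} [NormedField 𝕜] [CompleteSpace 𝕜] {t : 𝕜}
    (ht : ‖t‖ < 1) (k : ℕ) :
    HasSum (fun n : ℕ => (n.choose k : 𝕜) * t ^ n) (t ^ k / (1 - t) ^ (k + 1)) := by
  have hlow : ∑ i ∈ range k, (i.choose k : 𝕜) * t ^ i = 0 :=
    sum_eq_zero fun i hi => by simp [Nat.choose_eq_zero_of_lt (mem_range.1 hi)]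
  rw [← add_zero (t ^ k / _), ← hlow, ← hasSum_nat_add_iff, div_eq_mul_one_div]
  exact ((hasSum_choose_mul_geometric_of_norm_lt_one k ht).mul_left (t ^ k)).congr_fun
    fun n => by rw [pow_add]; ring

lemma hasSum_pow_div_one_sub_pow_succ_mul_pow_div_factorial {t : ℝ} (ht : t ≠ 1) (y : ℝ) :
    HasSum (fun k : ℕ => t ^ k / (1 - t) ^ (k + 1) * (y ^ k / k !))
      ((1 - t)⁻¹ * exp (t * y / (1 - t))) := by
  have h1t : 1 - t ≠ 0 := sub_ne_zero.2 ht.symm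
  rw [exp_eq_exp_ℝ]
  refine ((NormedSpace.expSeries_div_hasSum_exp (t * y / (1 - t))).mul_left (1 - t)⁻¹).congr_fun
    fun k => ?_
  rw [div_pow, mul_pow, pow_succ]
  field_simp

lemma summable_choose_mul_pow_mul_pow_div_factorial {t : ℝ} (ht : |t| < 1) (y : ℝ) :
    Summable (fun p : ℕ × ℕ => (p.2.choose p.1 : ℝ) * t ^ p.2 * (y ^ p.1 / p.1 !)) := by
  have hfib (k : ℕ) : HasSum (fun n : ℕ => (n.choose k : ℝ) * |t| ^ n * (|y| ^ k / k !))
      (|t| ^ k / (1 - |t|) ^ (k + 1) * (|y| ^ k / k !)) :=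
    (hasSum_choose_mul_pow (t := |t|) (by rwa [norm_abs_eq_norm]) k).mul_right _
  have hfibs : Summable fun k : ℕ => ∑' n : ℕ, (n.choose k : ℝ) * |t| ^ n * (|y| ^ k / k !) := by
    simp only [(hfib _).tsum_eq]
    exact (hasSum_pow_div_one_sub_pow_succ_mul_pow_div_factorial
      (by linarith [le_abs_self t]) |y|).summable
  have hG : Summable fun p : ℕ × ℕ => (p.2.choose p.1 : ℝ) * |t| ^ p.2 * (|y| ^ p.1 / p.1 !) :=
    (summable_prod_of_nonneg fun p => by positivity).2 ⟨fun k => (hfib k).summable, hfibs⟩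
  refine hG.of_norm_bounded fun p => le_of_eq ?_
  simp only [norm_mul, norm_div, norm_pow, Real.norm_eq_abs, Nat.abs_cast]

lemma hasSum_choose_mul_pow_mul_pow_div_factorial {t : ℝ} (ht : |t| < 1) (y : ℝ) :
    HasSum (fun p : ℕ × ℕ => (p.2.choose p.1 : ℝ) * t ^ p.2 * (y ^ p.1 / p.1 !))
      ((1 - t)⁻¹ * exp (t * y / (1 - t))) := by
  have hsum := (summable_choose_mul_pow_mul_pow_div_factorial ht y).hasSum
  have hfib := hsum.prod_fiberwise fun k =>
    (hasSum_choose_mul_pow (t := t) (by rwa [Real.norm_eq_abs]) k).mul_right (y ^ k / k !)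
  rwa [← (hasSum_pow_div_one_sub_pow_succ_mul_pow_div_factorial
    (by linarith [le_abs_self t]) y).unique hfib] at hsum

theorem hasSum_pow_mul_laguerre {t : ℝ} (ht : |t| < 1) (x : ℝ) :
    HasSum (fun n => t ^ n * laguerre n x) ((1 - t)⁻¹ * exp (-(t * x) / (1 - t))) := by
  have hswap := (Equiv.prodComm ℕ ℕ).hasSum_iff.2
    (hasSum_choose_mul_pow_mul_pow_div_factorial ht (-x))
  rw [mul_neg] at hswap
  refine hswap.prod_fiberwise fun n => ?_
  have hvanish : ∀ k ∉ range (n + 1), (n.choose k : ℝ) * t ^ n * ((-x) ^ k / k !) = 0 :=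
    fun k hk => by simp [Nat.choose_eq_zero_of_lt (by simpa using hk : n < k)]
  have hL : t ^ n * laguerre n x
      = ∑ k ∈ range (n + 1), (n.choose k : ℝ) * t ^ n * ((-x) ^ k / k !) := by
    rw [laguerre, mul_sum]
    exact sum_congr rfl fun k _ => by ring
  rw [hL]
  exact hasSum_sum_of_ne_finset_zero hvanish

lemma hasSum_pow_two_mul_mul_of_hasSum_pow_mul {K : Type*} [Field K] [TopologicalSpace K]
    [IsTopologicalRing K] [NeZero (2 : K)] {a : ℕ → K} {t A B : K}
    (hA : HasSum (fun n => t ^ n * a n) A) (hB : HasSum (fun n => (-t) ^ n * a n) B) :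
    HasSum (fun n => t ^ (2 * n) * a (2 * n)) ((A + B) / 2) := by
  have hinj : Function.Injective (fun n : ℕ => 2 * n) := fun _ _ h => by simpa using h
  have hodd : ∀ n ∉ Set.range (fun n : ℕ => 2 * n), (t ^ n * a n + (-t) ^ n * a n) / 2 = 0 := by
    intro n hn
    have : Odd n := Nat.not_even_iff_odd.1 fun ⟨m, hm⟩ => hn ⟨m, by simp only; omega⟩
    rw [this.neg_pow]
    ring
  refine (hinj.hasSum_iff hodd).2 ((hA.add hB).div_const 2) |>.congr_fun fun n => ?_
  simp only [Function.comp, (even_two_mul n).neg_pow, ← two_mul]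
  exact (mul_div_cancel_left₀ _ two_ne_zero).symm

theorem stmt_13_general (l : ℝ) (hl : l ∈ Set.Ico (0 : ℝ) 1) (x : ℝ) :
    (1 - l ^ 2) * Real.exp (-x / 2) * ∑' n : ℕ, l ^ (2 * n) * laguerre (2 * n) x
      = (1 / 2) * ((1 + l) * Real.exp (-(((1 + l) / (1 - l)) * x) / 2)
          + (1 - l) * Real.exp (-(((1 - l) / (1 + l)) * x) / 2)) := by
  obtain ⟨hl0, hl1⟩ := hl
  have h1l : 1 - l ≠ 0 := by linarith
  have h2l : 1 + l ≠ 0 := by linarith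
  have habs : |l| < 1 := by rwa [abs_of_nonneg hl0]
  have hS := hasSum_pow_two_mul_mul_of_hasSum_pow_mul (hasSum_pow_mul_laguerre habs x)
    (hasSum_pow_mul_laguerre (by rwa [abs_neg]) x)
  have e1 : -(((1 + l) / (1 - l)) * x) / 2 = -x / 2 + -(l * x) / (1 - l) := by
    field_simp; ring
  have e2 : -(((1 - l) / (1 + l)) * x) / 2 = -x / 2 + -(-l * x) / (1 + l) := by
    field_simp; ring
  rw [hS.tsum_eq, e1, e2, exp_add, exp_add, sub_neg_eq_add]
  field_simp
  ring

/-- For `λ ∈ [0,1)` and `x ≥ 0`: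
`(1−λ²)·e^{−x/2}·Σ_n λ^{2n}·L_{2n}(x)
  = (1/2)·((1+λ)·e^{−((1+λ)/(1−λ))·x/2} + (1−λ)·e^{−((1−λ)/(1+λ))·x/2})`. -/
theorem stmt_13 (l : ℝ) (hl : l ∈ Set.Ico (0 : ℝ) 1) (x : ℝ) (hx : 0 ≤ x) :
    (1 - l ^ 2) * Real.exp (-x / 2) * ∑' n : ℕ, l ^ (2 * n) * laguerre (2 * n) x
      = (1 / 2) * ((1 + l) * Real.exp (-(((1 + l) / (1 - l)) * x) / 2)
          + (1 - l) * Real.exp (-(((1 - l) / (1 + l)) * x) / 2)) :=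
  stmt_13_general l hl x
end
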